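/- For the Gaussian random assignment field, E[M_n] ≥ (1/sqrt(n)) * sum_{k=1}^{n} μ_k, where μ_k is the expectation of the maximum of k i.i.d. standard Gaussian random variables and M_n = max_{u in S_n} g_u. -/

import Mathlib

open MeasureTheory ProbabilityTheory Finset
attribute [local instance] Classical.propDecidable


section Greedy

variable {n : ℕ}

/-- Pick the smallest index in `S` achieving the maximum of `a` over `S`. -/
noncomputable def pickF (hn : 0 < n) (a : Fin n → ℝ) (S : Finset (Fin n)) : Fin n :=
  if h : (S.filter fun j => ∀ j' ∈ S, a j' ≤ a j).Nonempty then
    (S.filter fun j => ∀ j' ∈ S, a j' ≤ a j).min' h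
  else ⟨0, hn⟩

lemma pickF_spec (hn : 0 < n) {a : Fin n → ℝ} {S : Finset (Fin n)} (hS : S.Nonempty) :
    pickF hn a S ∈ S ∧ ∀ j ∈ S, a j ≤ a (pickF hn a S) := by
  obtain ⟨b, hb, hmax⟩ := S.exists_max_image a hS
  have hne : (S.filter fun j => ∀ j' ∈ S, a j' ≤ a j).Nonempty :=
    ⟨b, Finset.mem_filter.2 ⟨hb, hmax⟩⟩
  rw [pickF, dif_pos hne]
  have hmem := Finset.min'_mem _ hne
  rw [Finset.mem_filter] at hmem
  exact ⟨hmem.1, hmem.2⟩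

lemma measurableSet_filter_fiber (S T : Finset (Fin n)) :
    MeasurableSet {a : Fin n → ℝ | (S.filter fun j => ∀ j' ∈ S, a j' ≤ a j) = T} := by
  have hP : ∀ j : Fin n, MeasurableSet {a : Fin n → ℝ | ∀ j' ∈ S, a j' ≤ a j} := by
    intro j
    have : {a : Fin n → ℝ | ∀ j' ∈ S, a j' ≤ a j} =
        ⋂ (j' : Fin n) (_ : j' ∈ S), {a : Fin n → ℝ | a j' ≤ a j} := by
      ext a; simp
    rw [this]
    exact MeasurableSet.iInter fun j' => MeasurableSet.iInter fun _ =>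
      measurableSet_le (measurable_pi_apply j') (measurable_pi_apply j)
  have : {a : Fin n → ℝ | (S.filter fun j => ∀ j' ∈ S, a j' ≤ a j) = T} =
      ⋂ j : Fin n, {a : Fin n → ℝ | ((j ∈ S ∧ ∀ j' ∈ S, a j' ≤ a j) ↔ j ∈ T)} := by
    ext a
    simp only [Set.mem_setOf_eq, Set.mem_iInter, Finset.ext_iff, Finset.mem_filter]
  rw [this]
  refine MeasurableSet.iInter fun j => ?_
  by_cases hjS : j ∈ S <;> by_cases hjT : j ∈ T
  · have : {a : Fin n → ℝ | ((j ∈ S ∧ ∀ j' ∈ S, a j' ≤ a j) ↔ j ∈ T)} =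
        {a : Fin n → ℝ | ∀ j' ∈ S, a j' ≤ a j} := by ext a; simp [hjS, hjT]
    rw [this]; exact hP j
  · have : {a : Fin n → ℝ | ((j ∈ S ∧ ∀ j' ∈ S, a j' ≤ a j) ↔ j ∈ T)} =
        {a : Fin n → ℝ | ∀ j' ∈ S, a j' ≤ a j}ᶜ := by ext a; simp [hjS, hjT]
    rw [this]; exact (hP j).compl
  · have : {a : Fin n → ℝ | ((j ∈ S ∧ ∀ j' ∈ S, a j' ≤ a j) ↔ j ∈ T)} = ∅ := by
      ext a; simp [hjS, hjT]
    rw [this]; exact MeasurableSet.empty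
  · have : {a : Fin n → ℝ | ((j ∈ S ∧ ∀ j' ∈ S, a j' ≤ a j) ↔ j ∈ T)} = Set.univ := by
      ext a; simp [hjS, hjT]
    rw [this]; exact MeasurableSet.univ

lemma measurableSet_pickF_fiber (hn : 0 < n) (S : Finset (Fin n)) (j : Fin n) :
    MeasurableSet {a : Fin n → ℝ | pickF hn a S = j} := by
  have : {a : Fin n → ℝ | pickF hn a S = j} =
      ⋃ (T : Finset (Fin n)) (_ : (if h : T.Nonempty then T.min' h else (⟨0, hn⟩ : Fin n)) = j),
        {a : Fin n → ℝ | (S.filter fun j => ∀ j' ∈ S, a j' ≤ a j) = T} := by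
    ext a
    simp only [Set.mem_setOf_eq, Set.mem_iUnion]
    constructor
    · intro h
      exact ⟨S.filter fun j => ∀ j' ∈ S, a j' ≤ a j, h, rfl⟩
    · rintro ⟨T, hT, rfl⟩
      exact hT
  rw [this]
  exact MeasurableSet.iUnion fun T => MeasurableSet.iUnion fun _ =>
    measurableSet_filter_fiber S T

/-- Row index used at greedy step `i`. -/
def rowIdx (hn : 0 < n) (i : ℕ) : Fin n := if h : i < n then ⟨i, h⟩ else ⟨0, hn⟩

lemma rowIdx_coe (hn : 0 < n) (i : Fin n) : rowIdx hn (i : ℕ) = i := by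
  simp [rowIdx, i.isLt]

/-- Set of available columns at greedy step `i`. -/
noncomputable def avail (hn : 0 < n) (a : Fin n × Fin n → ℝ) : ℕ → Finset (Fin n)
  | 0 => Finset.univ
  | i + 1 => (avail hn a i).erase (pickF hn (fun j => a (rowIdx hn i, j)) (avail hn a i))

/-- The column picked at greedy step `i`. -/
noncomputable def pickN (hn : 0 < n) (a : Fin n × Fin n → ℝ) (i : ℕ) : Fin n :=
  pickF hn (fun j => a (rowIdx hn i, j)) (avail hn a i)

lemma pickN_mem' (hn : 0 < n) {a : Fin n × Fin n → ℝ} {i : ℕ}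
    (h : (avail hn a i).Nonempty) : pickN hn a i ∈ avail hn a i :=
  (pickF_spec hn h).1

lemma avail_succ (hn : 0 < n) (a : Fin n × Fin n → ℝ) (i : ℕ) :
    avail hn a (i + 1) = (avail hn a i).erase (pickN hn a i) := rfl

lemma card_avail (hn : 0 < n) (a : Fin n × Fin n → ℝ) :
    ∀ i, i ≤ n → (avail hn a i).card = n - i := by
  intro i
  induction i with
  | zero => simp [avail]
  | succ i ih =>
    intro hi
    have hi' : i < n := hi
    have hcard : (avail hn a i).card = n - i := ih hi'.le
    have hne : (avail hn a i).Nonempty := by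
      rw [← Finset.card_pos, hcard]; omega
    rw [avail_succ, Finset.card_erase_of_mem (pickN_mem' hn hne), hcard]
    omega

lemma avail_nonempty (hn : 0 < n) (a : Fin n × Fin n → ℝ) {i : ℕ} (hi : i < n) :
    (avail hn a i).Nonempty := by
  rw [← Finset.card_pos, card_avail hn a i hi.le]; omega

lemma pickN_mem (hn : 0 < n) (a : Fin n × Fin n → ℝ) {i : ℕ} (hi : i < n) :
    pickN hn a i ∈ avail hn a i :=
  (pickF_spec hn (avail_nonempty hn a hi)).1

lemma pickN_max (hn : 0 < n) (a : Fin n × Fin n → ℝ) {i : ℕ} (hi : i < n) :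
    ∀ j ∈ avail hn a i, a (rowIdx hn i, j) ≤ a (rowIdx hn i, pickN hn a i) :=
  (pickF_spec hn (avail_nonempty hn a hi)).2

lemma avail_mono (hn : 0 < n) (a : Fin n × Fin n → ℝ) {i i' : ℕ} (h : i ≤ i') :
    avail hn a i' ⊆ avail hn a i := by
  induction i' with
  | zero => simp_all
  | succ i' ih =>
    rcases Nat.lt_or_ge i (i' + 1) with h' | h'
    · exact (Finset.erase_subset _ _).trans (ih (by omega))
    · have : i = i' + 1 := le_antisymm h h'
      subst this; rfl

lemma pickN_injOn (hn : 0 < n) (a : Fin n × Fin n → ℝ) {i i' : ℕ}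
    (hi : i < i') (hi' : i' < n) : pickN hn a i ≠ pickN hn a i' := by
  intro h
  have h1 : pickN hn a i' ∈ avail hn a i' := pickN_mem hn a hi'
  have h2 : avail hn a i' ⊆ avail hn a (i + 1) := avail_mono hn a hi
  have h3 : pickN hn a i' ∈ (avail hn a i).erase (pickN hn a i) := h2 h1
  rw [← h] at h3
  exact (Finset.notMem_erase _ _) h3

lemma avail_congr (hn : 0 < n) {a b : Fin n × Fin n → ℝ} :
    ∀ i : ℕ, (∀ p : Fin n × Fin n, (p.1 : ℕ) < i → a p = b p) →
      avail hn a i = avail hn b i := by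
  intro i
  induction i with
  | zero => intro _; rfl
  | succ i ih =>
    intro hab
    have hrow : ((rowIdx hn i : Fin n) : ℕ) < i + 1 := by
      by_cases h : i < n <;> simp [rowIdx, h]
    have h1 : avail hn a i = avail hn b i := ih fun p hp => hab p (by omega)
    have h2 : (fun j => a (rowIdx hn i, j)) = fun j => b (rowIdx hn i, j) := by
      funext j; exact hab (rowIdx hn i, j) hrow
    show (avail hn a i).erase _ = (avail hn b i).erase _
    rw [h1, h2]

lemma measurableSet_avail_fiber (hn : 0 < n) (i : ℕ) (S : Finset (Fin n)) :
    MeasurableSet {a : Fin n × Fin n → ℝ | avail hn a i = S} := by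
  induction i generalizing S with
  | zero =>
    by_cases h : S = Finset.univ
    · have : {a : Fin n × Fin n → ℝ | avail hn a 0 = S} = Set.univ := by
        ext a; simp [avail, h]
      rw [this]; exact MeasurableSet.univ
    · have : {a : Fin n × Fin n → ℝ | avail hn a 0 = S} = ∅ := by
        ext a; simp [avail, Ne.symm h]
      rw [this]; exact MeasurableSet.empty
  | succ i ih =>
    have key : {a : Fin n × Fin n → ℝ | avail hn a (i + 1) = S} =
        ⋃ (T : Finset (Fin n)),
          ({a : Fin n × Fin n → ℝ | avail hn a i = T} ∩
            ((fun (a : Fin n × Fin n → ℝ) (j : Fin n) => a (rowIdx hn i, j)) ⁻¹'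
              {v : Fin n → ℝ | T.erase (pickF hn v T) = S})) := by
      ext a
      simp only [Set.mem_setOf_eq, Set.mem_iUnion, Set.mem_inter_iff, Set.mem_preimage]
      constructor
      · intro h
        exact ⟨avail hn a i, rfl, h⟩
      · rintro ⟨T, hT, h⟩
        rw [avail_succ, pickN, hT]
        exact h
    rw [key]
    refine MeasurableSet.iUnion fun T => (ih T).inter ?_
    have hset : MeasurableSet {v : Fin n → ℝ | T.erase (pickF hn v T) = S} := by
      have : {v : Fin n → ℝ | T.erase (pickF hn v T) = S} =
          ⋃ (j : Fin n) (_ : T.erase j = S), {v : Fin n → ℝ | pickF hn v T = j} := by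
        ext v
        simp only [Set.mem_setOf_eq, Set.mem_iUnion]
        exact ⟨fun h => ⟨pickF hn v T, h, rfl⟩, fun ⟨j, hj, hj'⟩ => by rw [hj']; exact hj⟩
      rw [this]
      exact MeasurableSet.iUnion fun j => MeasurableSet.iUnion fun _ =>
        measurableSet_pickF_fiber hn T j
    exact (measurable_pi_lambda _ fun j' => measurable_pi_apply _) hset

lemma measurableSet_pickN_fiber (hn : 0 < n) (i : ℕ) (j : Fin n) :
    MeasurableSet {a : Fin n × Fin n → ℝ | pickN hn a i = j} := by
  have key : {a : Fin n × Fin n → ℝ | pickN hn a i = j} =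
      ⋃ (T : Finset (Fin n)),
        ({a : Fin n × Fin n → ℝ | avail hn a i = T} ∩
          ((fun (a : Fin n × Fin n → ℝ) (j' : Fin n) => a (rowIdx hn i, j')) ⁻¹'
            {v : Fin n → ℝ | pickF hn v T = j})) := by
    ext a
    simp only [Set.mem_setOf_eq, Set.mem_iUnion, Set.mem_inter_iff, Set.mem_preimage]
    constructor
    · intro h
      exact ⟨avail hn a i, rfl, h⟩
    · rintro ⟨T, hT, h⟩
      rw [pickN, hT]
      exact h
  rw [key]
  refine MeasurableSet.iUnion fun T => (measurableSet_avail_fiber hn i T).inter ?_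
  exact (measurable_pi_lambda _ fun j' => measurable_pi_apply _) (measurableSet_pickF_fiber hn T j)

end Greedy

lemma integrable_id_gaussianReal : Integrable (id : ℝ → ℝ) (gaussianReal 0 1) := by
  rw [gaussianReal_of_var_ne_zero _ one_ne_zero]
  rw [integrable_withDensity_iff (measurable_gaussianPDF _ _)
    (ae_of_all _ fun x => ENNReal.ofReal_lt_top)]
  have : (fun x : ℝ => id x * (gaussianPDF 0 1 x).toReal) =
      fun x : ℝ => (Real.sqrt (2 * Real.pi))⁻¹ * (x * Real.exp (-(2:ℝ)⁻¹ * x ^ 2)) := by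
    funext x
    rw [gaussianPDF, ENNReal.toReal_ofReal (gaussianPDFReal_nonneg _ _ _), gaussianPDFReal]
    simp only [id_eq]
    push_cast
    ring_nf
  rw [this]
  refine Integrable.const_mul ?_ _
  have h := integrable_rpow_mul_exp_neg_mul_sq (b := (2:ℝ)⁻¹) (by norm_num) (s := 1) (by norm_num)
  simpa [Real.rpow_one] using h

lemma map_fun_eq_pi {Ω ι : Type*} [MeasurableSpace Ω] {P : Measure Ω} [IsProbabilityMeasure P]
    (c : ι → Ω → ℝ) (hmeas : ∀ p, Measurable (c p))
    (hindep : iIndepFun c P)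
    (hgauss : ∀ p, Measure.map (c p) P = gaussianReal 0 1)
    {k : ℕ} (e : Fin k → ι) (he : Function.Injective e) :
    Measure.map (fun ω m => c (e m) ω) P = Measure.pi (fun _ : Fin k => gaussianReal 0 1) := by
  classical
  refine (Measure.pi_eq (μ := fun _ : Fin k => gaussianReal 0 1) fun s hs => ?_).symm
  have hF : Measurable (fun ω (m : Fin k) => c (e m) ω) :=
    measurable_pi_lambda _ fun m => hmeas (e m)
  rw [Measure.map_apply hF (MeasurableSet.univ_pi hs)]
  have hpre : (fun ω (m : Fin k) => c (e m) ω) ⁻¹' (Set.pi Set.univ s) =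
      ⋂ m : Fin k, c (e m) ⁻¹' s m := by
    ext ω; simp [Set.mem_pi]
  rw [hpre]
  -- sets indexed by ι
  set sets : ι → Set Ω := fun p => ⋂ (m : Fin k) (_ : e m = p), c p ⁻¹' s m with hsets
  have hsets_e : ∀ m : Fin k, sets (e m) = c (e m) ⁻¹' s m := by
    intro m
    ext ω
    simp only [hsets, Set.mem_iInter, Set.mem_preimage]
    constructor
    · intro h; exact h m rfl
    · intro h m' hm'
      rw [he hm']; exact h
  have hbig : (⋂ m : Fin k, c (e m) ⁻¹' s m) = ⋂ p ∈ Finset.univ.image e, sets p := by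
    ext ω
    simp only [Set.mem_iInter, Finset.mem_image, Finset.mem_univ, true_and]
    constructor
    · rintro h p ⟨m, rfl⟩
      rw [hsets_e m]; exact h m
    · intro h m
      rw [← hsets_e m]; exact h (e m) ⟨m, rfl⟩
  rw [hbig]
  rw [hindep.meas_biInter (fun p hp => ?_)]
  · rw [Finset.prod_image (fun a _ b _ hab => he hab)]
    refine Finset.prod_congr rfl fun m _ => ?_
    rw [hsets_e m, ← Measure.map_apply (hmeas (e m)) (hs m), hgauss (e m)]
  · -- comap measurability of sets p
    refine MeasurableSet.iInter fun m => ?_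
    refine MeasurableSet.iInter fun hm => ?_
    exact ⟨s m, hs m, rfl⟩


/-- The expectation of the maximum of `k` independent standard Gaussian random
variables, realized on the canonical product space. -/
noncomputable def stdGaussianMaxExpect (k : ℕ) : ℝ :=
  ∫ x, (⨆ i : Fin k, x i) ∂(Measure.pi fun _ : Fin k => gaussianReal 0 1)


lemma sum_reindex (n : ℕ) (f : ℕ → ℝ) :
    ∑ i : Fin n, f (n - (i : ℕ)) = ∑ k ∈ Finset.Icc 1 n, f k := by
  rw [Fin.sum_univ_eq_sum_range (fun i => f (n - i))]
  have h1 : ∑ i ∈ Finset.range n, f (n - i) = ∑ i ∈ Finset.range n, f (n - 1 - i + 1) := by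
    refine Finset.sum_congr rfl fun i hi => ?_
    rw [Finset.mem_range] at hi
    congr 1
    omega
  rw [h1, Finset.sum_range_reflect (fun j => f (j + 1)) n]
  have h2 : Finset.Icc 1 n = Finset.map ⟨fun j => j + 1, fun a b h => by simpa using h⟩ (Finset.range n) := by
    ext x
    simp only [Finset.mem_Icc, Finset.mem_map, Finset.mem_range, Function.Embedding.coeFn_mk]
    constructor
    · rintro ⟨h1', h2'⟩; exact ⟨x - 1, by omega, by show x - 1 + 1 = x; omega⟩
    · rintro ⟨a, ha, rfl⟩; show 1 ≤ a + 1 ∧ a + 1 ≤ n; omega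
  rw [h2, Finset.sum_map]
  rfl

theorem stmt_15
    {Ω : Type*} [MeasurableSpace Ω] (P : Measure Ω) [IsProbabilityMeasure P]
    (n : ℕ) (hn : 0 < n)
    (c : Fin n × Fin n → Ω → ℝ)
    (hmeas : ∀ p, Measurable (c p))
    (hindep : iIndepFun c P)
    (hgauss : ∀ p, Measure.map (c p) P = gaussianReal 0 1)
    (g : Equiv.Perm (Fin n) → Ω → ℝ)
    (hg : ∀ u ω, g u ω = (1 / Real.sqrt n) * ∑ i, c (i, u i) ω)
    (M : Ω → ℝ) (hM : ∀ ω, M ω = ⨆ u : Equiv.Perm (Fin n), g u ω) :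
    (1 / Real.sqrt n) * ∑ k ∈ Finset.Icc 1 n, stdGaussianMaxExpect k ≤ ∫ ω, M ω ∂P := by
  classical
  set A : Ω → (Fin n × Fin n) → ℝ := fun ω p => c p ω with hA
  have hAmeas : Measurable A := measurable_pi_lambda _ fun p => hmeas p
  -- each entry is integrable
  have hcInt : ∀ p, Integrable (c p) P := by
    intro p
    have h0 := integrable_id_gaussianReal
    rw [← hgauss p] at h0
    have h1 := (integrable_map_measure aestronglyMeasurable_id (hmeas p).aemeasurable).1 h0
    simpa [Function.comp] using h1
  -- the greedy values
  set V : Fin n → Ω → ℝ := fun i ω => c (i, pickN hn (A ω) (i : ℕ)) ω with hV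
  -- pointwise bound
  have key1 : ∀ ω, (1 / Real.sqrt n) * ∑ i, V i ω ≤ M ω := by
    intro ω
    set f : Fin n → Fin n := fun i => pickN hn (A ω) (i : ℕ) with hf
    have hinj : Function.Injective f := by
      intro i i' h
      rcases lt_trichotomy (i : ℕ) (i' : ℕ) with h' | h' | h'
      · exact absurd h (pickN_injOn hn (A ω) h' i'.isLt)
      · exact Fin.ext h'
      · exact absurd h.symm (pickN_injOn hn (A ω) h' i.isLt)
    set u₀ : Equiv.Perm (Fin n) :=
      Equiv.ofBijective f ((Fintype.bijective_iff_injective_and_card f).2 ⟨hinj, rfl⟩) with hu₀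
    have hval : g u₀ ω = (1 / Real.sqrt n) * ∑ i, V i ω := by
      rw [hg]
      rfl
    rw [hM ω, ← hval]
    exact le_ciSup (f := fun u : Equiv.Perm (Fin n) => g u ω)
      (Set.Finite.bddAbove (Set.finite_range _)) u₀
  -- integrability of the V i
  have hVrepr : ∀ i : Fin n, V i = fun ω => ∑ j : Fin n,
      ((A ⁻¹' {a | pickN hn a (i : ℕ) = j}).indicator (c (i, j))) ω := by
    intro i
    funext ω
    rw [Finset.sum_eq_single (pickN hn (A ω) (i : ℕ))]
    · rw [Set.indicator_of_mem (by exact rfl)]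
    · intro j _ hj
      exact Set.indicator_of_notMem (fun h => hj (Eq.symm (by exact h))) _
    · intro h
      exact absurd (Finset.mem_univ _) h
  have hVint : ∀ i : Fin n, Integrable (V i) P := by
    intro i
    rw [hVrepr i]
    exact integrable_finset_sum _ fun j _ =>
      (hcInt (i, j)).indicator (hAmeas (measurableSet_pickN_fiber hn (i : ℕ) j))
  -- measurability and integrability of g and M
  have hgrepr : ∀ u, g u = fun ω => (1 / Real.sqrt n) * ∑ i, c (i, u i) ω :=
    fun u => funext (hg u)
  have hgmeas : ∀ u, Measurable (g u) := by
    intro u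
    rw [hgrepr u]
    exact (Finset.measurable_sum _ fun i _ => hmeas (i, u i)).const_mul _
  have hgInt : ∀ u, Integrable (g u) P := by
    intro u
    rw [hgrepr u]
    exact (integrable_finset_sum _ fun i _ => hcInt (i, u i)).const_mul _
  have hMrepr' : ∀ ω, M ω =
      Finset.univ.sup' Finset.univ_nonempty (fun u : Equiv.Perm (Fin n) => g u ω) := by
    intro ω
    rw [hM ω, ← Finset.sup'_univ_eq_ciSup]
  have hMrepr : M = Finset.univ.sup' Finset.univ_nonempty g := by
    funext ω
    rw [hMrepr' ω, Finset.sup'_apply]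
  have hMmeas : Measurable M := by
    rw [hMrepr]
    exact Finset.measurable_sup' Finset.univ_nonempty fun u _ => hgmeas u
  have habs : ∀ (u : Equiv.Perm (Fin n)) ω, |g u ω| ≤ ∑ u' : Equiv.Perm (Fin n), |g u' ω| :=
    fun u ω => Finset.single_le_sum (f := fun u' => |g u' ω|)
      (fun _ _ => abs_nonneg _) (Finset.mem_univ u)
  have hMbound : ∀ ω, |M ω| ≤ ∑ u : Equiv.Perm (Fin n), |g u ω| := by
    intro ω
    rw [hMrepr' ω, abs_le]
    constructor
    · have h1 := habs 1 ω
      have h2 : g 1 ω ≤ Finset.univ.sup' Finset.univ_nonempty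
          (fun u : Equiv.Perm (Fin n) => g u ω) :=
        Finset.le_sup' (f := fun u : Equiv.Perm (Fin n) => g u ω) (Finset.mem_univ 1)
      have h3 := neg_abs_le (g 1 ω)
      linarith
    · exact Finset.sup'_le _ _ fun u _ => (le_abs_self _).trans (habs u ω)
  have hMint : Integrable M P := by
    refine Integrable.mono (integrable_finset_sum Finset.univ fun u _ => (hgInt u).abs)
      hMmeas.aestronglyMeasurable (ae_of_all _ fun ω => ?_)
    rw [Real.norm_eq_abs, Real.norm_eq_abs]
    exact (hMbound ω).trans (le_abs_self _)
  -- the per-row integral identity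
  have hVi : ∀ i : Fin n, ∫ ω, V i ω ∂P = stdGaussianMaxExpect (n - (i : ℕ)) := by
    intro i
    set k : ℕ := n - (i : ℕ) with hk
    have hkpos : 0 < k := Nat.sub_pos_of_lt i.isLt
    set E : Finset (Fin n) → Set Ω := fun S => A ⁻¹' {a | avail hn a (i : ℕ) = S} with hE
    have hEmeas : ∀ S, MeasurableSet (E S) := fun S => hAmeas (measurableSet_avail_fiber hn _ S)
    set fS : Finset (Fin n) → Ω → ℝ := fun S ω =>
      if h : S.Nonempty then S.sup' h (fun j => c (i, j) ω) else 0 with hfS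
    -- integrability of fS
    have hfSmeas : ∀ S, Measurable (fS S) := by
      intro S
      by_cases hS : S.Nonempty
      · simp only [hfS, dif_pos hS]
        have h1 := Finset.measurable_sup' hS fun j _ => hmeas (i, j)
        have heq : (S.sup' hS fun j => c (i, j)) = fun ω => S.sup' hS fun j => c (i, j) ω :=
          funext fun ω => Finset.sup'_apply hS _ ω
        rwa [heq] at h1
      · simp only [hfS, dif_neg hS]
        exact measurable_const
    have habsc : ∀ (j : Fin n) ω, |c (i, j) ω| ≤ ∑ j' : Fin n, |c (i, j') ω| :=
      fun j ω => Finset.single_le_sum (f := fun j' => |c (i, j') ω|)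
        (fun _ _ => abs_nonneg _) (Finset.mem_univ j)
    have hfSbound : ∀ S (ω : Ω), |fS S ω| ≤ ∑ j : Fin n, |c (i, j) ω| := by
      intro S ω
      by_cases hS : S.Nonempty
      · simp only [hfS, dif_pos hS]
        rw [abs_le]
        obtain ⟨j₀, hj₀⟩ := hS
        constructor
        · have h1 := habsc j₀ ω
          have h2 : c (i, j₀) ω ≤ S.sup' ⟨j₀, hj₀⟩ (fun j => c (i, j) ω) :=
            Finset.le_sup' (f := fun j => c (i, j) ω) hj₀
          have h3 := neg_abs_le (c (i, j₀) ω)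
          linarith
        · exact Finset.sup'_le _ _ fun j _ => (le_abs_self _).trans (habsc j ω)
      · simp only [hfS, dif_neg hS, abs_zero]
        exact Finset.sum_nonneg fun j _ => abs_nonneg _
    have hfSint : ∀ S, Integrable (fS S) P := by
      intro S
      refine Integrable.mono (integrable_finset_sum Finset.univ fun j _ => (hcInt (i, j)).abs)
        (hfSmeas S).aestronglyMeasurable (ae_of_all _ fun ω => ?_)
      rw [Real.norm_eq_abs, Real.norm_eq_abs]
      exact (hfSbound S ω).trans (le_abs_self _)
    -- decomposition of V i
    have hVdec : V i = fun ω => ∑ S : Finset (Fin n), (E S).indicator (fS S) ω := by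
      funext ω
      rw [Finset.sum_eq_single (avail hn (A ω) (i : ℕ))]
      · have hne : (avail hn (A ω) (i : ℕ)).Nonempty := avail_nonempty hn (A ω) i.isLt
        rw [Set.indicator_of_mem (by exact rfl), hfS]
        simp only [dif_pos hne]
        refine (le_antisymm ?_ ?_).symm
        · refine Finset.sup'_le _ _ fun j hj => ?_
          have h := pickN_max hn (A ω) i.isLt j hj
          rwa [rowIdx_coe] at h
        · exact Finset.le_sup' (f := fun j => c (i, j) ω) (pickN_mem hn (A ω) i.isLt)
      · intro S _ hS
        exact Set.indicator_of_notMem (fun h => hS (Eq.symm (by exact h))) _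
      · intro h
        exact absurd (Finset.mem_univ _) h
    -- per-S integral
    have hperS : ∀ S : Finset (Fin n),
        ∫ ω, (E S).indicator (fS S) ω ∂P = (P (E S)).toReal * stdGaussianMaxExpect k := by
      intro S
      by_cases hcard : S.card = k
      · have hSne : S.Nonempty := by
          rw [← Finset.card_pos, hcard]; exact hkpos
        -- independence setup
        set s : Finset (Fin n × Fin n) :=
          Finset.univ.filter (fun p => (p.1 : ℕ) < (i : ℕ)) with hs
        set t : Finset (Fin n × Fin n) := S.image (fun j => ((i : Fin n), j)) with ht
        have hdisj : Disjoint s t := by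
          rw [Finset.disjoint_left]
          intro p hp hpt
          rw [hs, Finset.mem_filter] at hp
          rw [ht, Finset.mem_image] at hpt
          obtain ⟨j, _, rfl⟩ := hpt
          exact absurd hp.2 (lt_irrefl _)
        have hIF := hindep.indepFun_finset s t hdisj hmeas
        -- the functions
        set ext : ({ x // x ∈ s } → ℝ) → (Fin n × Fin n → ℝ) :=
          fun b p => if hp : p ∈ s then b ⟨p, hp⟩ else 0 with hext
        have hextmeas : Measurable ext := by
          refine measurable_pi_lambda _ fun p => ?_
          by_cases hp : p ∈ s
          · simp only [hext, dif_pos hp]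
            exact measurable_pi_apply _
          · simp only [hext, dif_neg hp]
            exact measurable_const
        set φ : ({ x // x ∈ s } → ℝ) → ℝ :=
          fun b => ({b' | avail hn (ext b') (i : ℕ) = S}).indicator (fun _ => (1 : ℝ)) b with hφ
        have hφmeas : Measurable φ :=
          measurable_const.indicator (hextmeas (measurableSet_avail_fiber hn _ S))
        set ψ : ({ x // x ∈ t } → ℝ) → ℝ :=
          fun b => S.attach.sup' (hSne.attach)
            (fun j => b ⟨((i : Fin n), j.1), Finset.mem_image.2 ⟨j.1, j.2, rfl⟩⟩) with hψ
        have hψmeas : Measurable ψ := by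
          have h1 := Finset.measurable_sup' (α := ℝ) hSne.attach
            (f := fun (j : { x // x ∈ S }) (b : { x // x ∈ t } → ℝ) =>
              b ⟨((i : Fin n), j.1), Finset.mem_image.2 ⟨j.1, j.2, rfl⟩⟩)
            (fun j _ => measurable_pi_apply _)
          have heq : (S.attach.sup' hSne.attach
              (fun (j : { x // x ∈ S }) (b : { x // x ∈ t } → ℝ) =>
                b ⟨((i : Fin n), j.1), Finset.mem_image.2 ⟨j.1, j.2, rfl⟩⟩)) = ψ :=
            funext fun b => Finset.sup'_apply hSne.attach _ b
          rwa [heq] at h1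
        have hcomp := hIF.comp hφmeas hψmeas
        have hφX : (φ ∘ fun a (p : { x // x ∈ s }) => c p a) = (E S).indicator (fun _ => (1 : ℝ)) := by
          funext ω
          have hagree : avail hn (ext fun p : { x // x ∈ s } => c p ω) (i : ℕ)
              = avail hn (A ω) (i : ℕ) := by
            refine avail_congr hn _ fun p hp => ?_
            have hp' : p ∈ s := by
              rw [hs, Finset.mem_filter]
              exact ⟨Finset.mem_univ _, hp⟩
            simp [hext, dif_pos hp', hA]
          simp only [Function.comp_apply, hφ, hE, Set.indicator_apply, Set.mem_setOf_eq,
            Set.mem_preimage, hagree]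
        have hψY : (ψ ∘ fun a (p : { x // x ∈ t }) => c p a) = fS S := by
          funext ω
          simp only [Function.comp_apply, hψ, hfS, dif_pos hSne]
          apply le_antisymm
          · exact Finset.sup'_le _ _ fun j _ => Finset.le_sup' (fun j' => c (i, j') ω) j.2
          · refine Finset.sup'_le _ _ fun j hj => ?_
            exact Finset.le_sup' (fun j' : { x // x ∈ S } => c (i, j'.1) ω)
              (Finset.mem_attach _ ⟨j, hj⟩)
        have hIndep2 : IndepFun ((E S).indicator (fun _ => (1 : ℝ))) (fS S) P := by
          rw [← hφX, ← hψY]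
          exact hcomp
        have hprod : (E S).indicator (fS S) =
            ((E S).indicator (fun _ => (1 : ℝ))) * fS S := by
          funext ω
          simp only [Pi.mul_apply, Set.indicator_apply]
          by_cases hmem : ω ∈ E S <;> simp [hmem]
        have hind1int : Integrable ((E S).indicator (fun _ => (1 : ℝ))) P :=
          (integrable_const 1).indicator (hEmeas S)
        have hstep : ∫ ω, (E S).indicator (fS S) ω ∂P =
            integral P (((E S).indicator fun _ => (1 : ℝ)) * fS S) := by
          rw [← hprod]
        rw [hstep, hIndep2.integral_mul_eq_mul_integral hind1int.aestronglyMeasurable (hfSint S).aestronglyMeasurable]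
        have hint1 : ∫ ω, (E S).indicator (fun _ => (1 : ℝ)) ω ∂P = (P (E S)).toReal := by
          have h := integral_indicator_one (μ := P) (hEmeas S)
          exact h
        rw [hint1]
        -- value of ∫ fS
        have hval : ∫ ω, fS S ω ∂P = stdGaussianMaxExpect k := by
          set e := S.orderIsoOfFin hcard with he
          set F : Ω → (Fin k → ℝ) := fun ω m => c (i, (e m : Fin n)) ω with hF
          have hinj2 : Function.Injective (fun m : Fin k => ((i : Fin n), (e m : Fin n))) := by
            intro m m' h
            have h2 : (e m : Fin n) = (e m' : Fin n) := congrArg Prod.snd h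
            exact e.injective (Subtype.ext h2)
          have hlaw := map_fun_eq_pi c hmeas hindep hgauss _ hinj2
          haveI : Nonempty (Fin k) := ⟨⟨0, hkpos⟩⟩
          have hpt : ∀ ω, fS S ω = ⨆ m : Fin k, F ω m := by
            intro ω
            rw [hfS]
            simp only [dif_pos hSne]
            rw [← Finset.sup'_univ_eq_ciSup]
            apply le_antisymm
            · refine Finset.sup'_le _ _ fun j hj => ?_
              have hcalc : F ω (e.symm ⟨j, hj⟩) = c (i, j) ω := by
                rw [hF]
                simp
              rw [← hcalc]
              exact Finset.le_sup' _ (Finset.mem_univ _)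
            · refine Finset.sup'_le _ _ fun m _ => ?_
              exact Finset.le_sup' (fun j => c (i, j) ω) (e m).2
          have hFmeas : Measurable F := measurable_pi_lambda _ fun m => hmeas _
          have hsupmeas : Measurable (fun x : Fin k → ℝ => ⨆ m, x m) := by
            have h1 := Finset.measurable_sup' (α := ℝ) (Finset.univ_nonempty (α := Fin k))
              (f := fun (m : Fin k) (x : Fin k → ℝ) => x m)
              (fun m _ => measurable_pi_apply m)
            have h2 : (Finset.univ.sup' Finset.univ_nonempty
                (fun (m : Fin k) (x : Fin k → ℝ) => x m)) =
                fun x : Fin k → ℝ => ⨆ m, x m := by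
              funext x
              rw [Finset.sup'_apply, Finset.sup'_univ_eq_ciSup]
            rwa [h2] at h1
          calc ∫ ω, fS S ω ∂P = ∫ ω, ⨆ m : Fin k, F ω m ∂P := by
                refine integral_congr_ae (ae_of_all _ fun ω => hpt ω)
            _ = ∫ x, (⨆ m : Fin k, x m) ∂(Measure.map F P) :=
                (integral_map hFmeas.aemeasurable hsupmeas.aestronglyMeasurable).symm
            _ = stdGaussianMaxExpect k := by
                rw [show Measure.map F P = Measure.pi (fun _ : Fin k => gaussianReal 0 1)
                  from hlaw]
                rfl
        rw [hval]
      · -- card mismatch: the event is empty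
        have hempty : E S = ∅ := by
          ext ω
          simp only [hE, Set.mem_preimage, Set.mem_setOf_eq, Set.mem_empty_iff_false,
            iff_false]
          intro h
          apply hcard
          rw [← h, card_avail hn (A ω) (i : ℕ) i.isLt.le]
        rw [hempty]
        simp
    -- sum of probabilities is 1
    have hpart : (⋃ S : Finset (Fin n), E S) = Set.univ := by
      ext ω
      simp only [Set.mem_iUnion, Set.mem_univ, iff_true, hE, Set.mem_preimage, Set.mem_setOf_eq]
      exact ⟨avail hn (A ω) (i : ℕ), rfl⟩
    have hdisjE : Pairwise (Function.onFun Disjoint E) := by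
      intro S S' hSS'
      rw [Function.onFun, Set.disjoint_left]
      intro ω h1 h2
      rw [hE, Set.mem_preimage, Set.mem_setOf_eq] at h1 h2
      exact hSS' (h1 ▸ h2 ▸ rfl)
    have hsum1 : ∑ S : Finset (Fin n), (P (E S)).toReal = 1 := by
      have h1 : P (⋃ S : Finset (Fin n), E S) = ∑' S, P (E S) :=
        measure_iUnion hdisjE fun S => hEmeas S
      rw [hpart, measure_univ, tsum_fintype] at h1
      have h2 := congrArg ENNReal.toReal h1
      rw [ENNReal.toReal_one, ENNReal.toReal_sum (fun S _ => measure_ne_top P _)] at h2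
      exact h2.symm
    -- put it together
    rw [hVdec, integral_finset_sum _ fun S _ => (hfSint S).indicator (hEmeas S)]
    calc ∑ S : Finset (Fin n), ∫ ω, (E S).indicator (fS S) ω ∂P
        = ∑ S : Finset (Fin n), (P (E S)).toReal * stdGaussianMaxExpect k :=
          Finset.sum_congr rfl fun S _ => hperS S
      _ = (∑ S : Finset (Fin n), (P (E S)).toReal) * stdGaussianMaxExpect k :=
          (Finset.sum_mul _ _ _).symm
      _ = stdGaussianMaxExpect k := by rw [hsum1, one_mul]
  -- final assembly
  have hLint : Integrable (fun ω => (1 / Real.sqrt n) * ∑ i, V i ω) P :=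
    (integrable_finset_sum _ fun i _ => hVint i).const_mul _
  have hle : ∫ ω, (1 / Real.sqrt n) * ∑ i, V i ω ∂P ≤ ∫ ω, M ω ∂P :=
    integral_mono hLint hMint key1
  have heq : ∫ ω, (1 / Real.sqrt n) * ∑ i, V i ω ∂P =
      (1 / Real.sqrt n) * ∑ k ∈ Finset.Icc 1 n, stdGaussianMaxExpect k := by
    rw [integral_const_mul, integral_finset_sum _ fun i _ => hVint i]
    congr 1
    rw [← sum_reindex n stdGaussianMaxExpect]
    exact Finset.sum_congr rfl fun i _ => hVi i
  rw [← heq]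
  exact hle
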